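/- arXiv:1903.02364 — 2 statements merged into one kernel-verified Lean document; each statement's English description precedes it below -/
import Mathlib

section
/- For every real H with 1/2 < H < 1 there exists a constant C > 0 such that for all real r > 1, |(r+1)^{2H} − 2r^{2H} + (r−1)^{2H} − 2H(2H−1) r^{2H−2}| ≤ C (r−1)^{2H−2}. -/
lemma rpow_mvt (p a b : ℝ) (ha : 0 < a) (hab : a < b) :
    ∃ c ∈ Set.Ioo a b, b ^ p - a ^ p = (b - a) * (p * c ^ (p - 1)) := by
  obtain ⟨c, hc, hceq⟩ := exists_hasDerivAt_eq_slope (fun x => x ^ p)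
    (fun x => p * x ^ (p - 1)) hab
    (fun x hx => (Real.continuousAt_rpow_const x p
      (Or.inl (ne_of_gt (lt_of_lt_of_le ha hx.1)))).continuousWithinAt)
    (fun x hx => Real.hasDerivAt_rpow_const (Or.inl (ne_of_gt (ha.trans hx.1))))
  refine ⟨c, hc, ?_⟩
  have hba : b - a ≠ 0 := by linarith
  field_simp [slope_def_field] at hceq
  linear_combination -hceq

/-- Taylor estimate for the second difference of `x ↦ x^(2H)`. -/
theorem second_difference_taylor (H : ℝ) (hH : 1 / 2 < H) (hH1 : H < 1) :
    ∃ C > 0, ∀ r : ℝ, 1 < r →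
      |(r + 1) ^ (2 * H) - 2 * r ^ (2 * H) + (r - 1) ^ (2 * H)
        - 2 * H * (2 * H - 1) * r ^ (2 * H - 2)|
        ≤ C * (r - 1) ^ (2 * H - 2) := by
  refine ⟨6 * H * (2 * H - 1), by nlinarith, fun r hr => ?_⟩
  have hr0 : (0:ℝ) < r - 1 := by linarith
  have hrpos : (0:ℝ) < r := by linarith
  obtain ⟨ξ, hξ, hξeq⟩ := rpow_mvt (2 * H) r (r + 1) hrpos (by linarith)
  obtain ⟨η, hη, hηeq⟩ := rpow_mvt (2 * H) (r - 1) r hr0 (by linarith)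
  obtain ⟨c, hc, hceq⟩ := rpow_mvt (2 * H - 1) (r - 1) (r + 1) hr0 (by linarith)
  have hE : (0:ℝ) < (r - 1) ^ (2 * H - 2) := Real.rpow_pos_of_pos hr0 _
  have hηξ : η ^ (2 * H - 1) ≤ ξ ^ (2 * H - 1) :=
    Real.rpow_le_rpow (by linarith [hη.1]) (by linarith [hη.2, hξ.1]) (by linarith)
  have hξb : ξ ^ (2 * H - 1) ≤ (r + 1) ^ (2 * H - 1) :=
    Real.rpow_le_rpow (by linarith [hξ.1]) (le_of_lt hξ.2) (by linarith)
  have hηb : (r - 1) ^ (2 * H - 1) ≤ η ^ (2 * H - 1) :=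
    Real.rpow_le_rpow (le_of_lt hr0) (le_of_lt hη.1) (by linarith)
  have hcb : c ^ (2 * H - 1 - 1) ≤ (r - 1) ^ (2 * H - 2) := by
    have := Real.rpow_le_rpow_of_nonpos hr0 (le_of_lt hc.1) (z := 2 * H - 2) (by linarith)
    have h2 : (2 * H - 1 - 1) = 2 * H - 2 := by ring
    rwa [h2]
  have hTb : r ^ (2 * H - 2) ≤ (r - 1) ^ (2 * H - 2) :=
    Real.rpow_le_rpow_of_nonpos hr0 (by linarith) (by linarith)
  have hTpos : (0:ℝ) < r ^ (2 * H - 2) := Real.rpow_pos_of_pos hrpos _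
  have hcpos : (0:ℝ) < c ^ (2 * H - 1 - 1) := Real.rpow_pos_of_pos (by linarith [hc.1]) _
  -- second difference D = 2H (ξ^(2H-1) - η^(2H-1))
  have hD : (r + 1) ^ (2 * H) - 2 * r ^ (2 * H) + (r - 1) ^ (2 * H)
      = 2 * H * (ξ ^ (2 * H - 1) - η ^ (2 * H - 1)) := by
    have h1 : (2 * H - 1 : ℝ) = 2 * H - 1 := rfl
    rw [show (2*H) - 1 = 2*H - 1 from rfl] at hξeq hηeq
    ring_nf at hξeq hηeq ⊢
    linarith [hξeq, hηeq]
  rw [abs_le]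
  constructor
  · nlinarith [mul_nonneg (by linarith : (0:ℝ) ≤ 2 * H) (sub_nonneg.mpr hηξ),
      mul_le_mul_of_nonneg_left hTb (by nlinarith : (0:ℝ) ≤ 2 * H * (2 * H - 1)),
      mul_pos (show (0:ℝ) < 4 * H * (2 * H - 1) by nlinarith) hE]
  · have hg : (r + 1) ^ (2 * H - 1) - (r - 1) ^ (2 * H - 1)
        = 2 * ((2 * H - 1) * c ^ (2 * H - 1 - 1)) := by linarith [hceq]
    have h4 : 2 * H * (ξ ^ (2 * H - 1) - η ^ (2 * H - 1))
        ≤ 2 * H * ((r + 1) ^ (2 * H - 1) - (r - 1) ^ (2 * H - 1)) :=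
      mul_le_mul_of_nonneg_left (by linarith [hξb, hηb]) (by linarith)
    have h5 : 4 * H * (2 * H - 1) * c ^ (2 * H - 1 - 1)
        ≤ 4 * H * (2 * H - 1) * (r - 1) ^ (2 * H - 2) :=
      mul_le_mul_of_nonneg_left hcb (by nlinarith)
    have h6 : 2 * H * ((r + 1) ^ (2 * H - 1) - (r - 1) ^ (2 * H - 1))
        = 4 * H * (2 * H - 1) * c ^ (2 * H - 1 - 1) := by
      rw [hg]; ring
    nlinarith [mul_nonneg (by nlinarith : (0:ℝ) ≤ 2 * H * (2 * H - 1)) hTpos.le,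
      mul_nonneg (by nlinarith : (0:ℝ) ≤ 2 * H * (2 * H - 1)) hE.le]
end

section
/- Let H ∈ (0, 1/2), α > 1/(2(1−H)), Δ = n^{−α}, and let Y_t = ∫_0^t f(s,X_s)ds with |f| ≤ M. Let a be a filter of length p+1. Then n^{−1/2} Δ^{−2H} ∑_{i=0}^{n−p} (Δ_a Y_i)^2 ≤ C n^{1/2 − α(2−2H)} → 0, and E[n^{−1/2} Δ^{−2H} ∑_{i=0}^{n−p} |Δ_a B^H_i| |Δ_a Y_i|] ≤ C n^{1/2 − α(1−H)} → 0 as n → ∞. -/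
/-! Because `∑ aᵢ = 0`, `Δ_a Y_i = ∑ a_k (Y_{(k+i)Δ} - Y_{iΔ})`; as `|f| ≤ M` makes `Y`
`M`-Lipschitz, `|Δ_a Y_i| ≤ K Δ` uniformly in `i` and `ω`. The mean absolute value of a centred
Gaussian is at most its standard deviation, so `E|Δ_a B_i| ≤ √σ_{a,Δ} = √σ₁ Δ^H` by
self-similarity. Summing `n - p + 1 ≤ 2n` such terms, the two normalised sums are bounded by
constant multiples of `n^{1/2 - α(2-2H)}` and `n^{1/2 - α(1-H)}`, and both exponents are negative
exactly because `α > 1/(2(1-H))`. -/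

open Finset MeasureTheory ProbabilityTheory Filter

/-- Filtered increment of a random process `Z` on the grid of mesh `Δ`. -/
def deltaAOmega {Ω : Type*} (a : ℕ → ℝ) (p : ℕ) (Δ : ℝ) (Z : ℝ → Ω → ℝ)
    (j : ℕ) (ω : Ω) : ℝ :=
  ∑ i ∈ range (p + 1), a i * Z (((i + j : ℕ) : ℝ) * Δ) ω

open scoped NNReal Topology

section Gaussian

variable {Ω : Type*} [MeasurableSpace Ω] {μ : Measure Ω}

lemma sq_integral_abs_le_integral_sq [IsProbabilityMeasure μ] {X : Ω → ℝ} (hX : MemLp X 2 μ) :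
    (∫ ω, |X ω| ∂μ) ^ 2 ≤ ∫ ω, X ω ^ 2 ∂μ := by
  have h := variance_nonneg |X| μ
  rw [variance_eq_sub hX.abs] at h
  simpa [sq_abs] using h

lemma integral_abs_gaussianReal_le_sqrt (v : ℝ≥0) : ∫ x, |x| ∂gaussianReal 0 v ≤ √v := by
  have hsq : ∫ x, x ^ 2 ∂gaussianReal 0 v = v := by
    rw [← variance_of_integral_eq_zero aemeasurable_id' integral_id_gaussianReal,
      variance_fun_id_gaussianReal]
  refine Real.le_sqrt_of_sq_le ?_
  exact hsq ▸ sq_integral_abs_le_integral_sq (memLp_id_gaussianReal 2)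

lemma integrable_abs_of_map_eq_gaussianReal {Z : Ω → ℝ} {v : ℝ≥0} (hZ : AEMeasurable Z μ)
    (hlaw : μ.map Z = gaussianReal 0 v) : Integrable (fun ω => |Z ω|) μ := by
  refine (integrable_map_measure continuous_abs.aestronglyMeasurable hZ).mp ?_
  rw [hlaw]
  exact ((memLp_id_gaussianReal 1).integrable le_rfl).abs

lemma integral_abs_le_sqrt_of_map_eq_gaussianReal {Z : Ω → ℝ} {v : ℝ≥0} (hZ : AEMeasurable Z μ)
    (hlaw : μ.map Z = gaussianReal 0 v) : ∫ ω, |Z ω| ∂μ ≤ √v := by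
  rw [← integral_map hZ continuous_abs.aestronglyMeasurable, hlaw]
  exact integral_abs_gaussianReal_le_sqrt v

end Gaussian

lemma sqrt_rpow_two_mul {x : ℝ} (hx : 0 ≤ x) (y : ℝ) : √(x ^ (2 * y)) = x ^ y := by
  rw [mul_comm, Real.rpow_mul hx, Real.rpow_two, Real.sqrt_sq (by positivity)]

section Increments

variable {Ω : Type*}

lemma abs_intervalIntegral_sub_le {g : ℝ → ℝ} {M : ℝ} (hg : ∀ s, 0 ≤ s → |g s| ≤ M)
    (hg_int : ∀ t, IntervalIntegrable g volume 0 t) {s t : ℝ} (hs : 0 ≤ s) (hst : s ≤ t) :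
    |(∫ x in (0 : ℝ)..t, g x) - ∫ x in (0 : ℝ)..s, g x| ≤ M * (t - s) := by
  rw [intervalIntegral.integral_interval_sub_left (hg_int t) (hg_int s),
    ← abs_of_nonneg (sub_nonneg.mpr hst)]
  refine intervalIntegral.norm_integral_le_of_norm_le_const (f := g) fun x hx => ?_
  rw [Set.uIoc_of_le hst] at hx
  exact hg x (hs.trans hx.1.le)

lemma deltaAOmega_eq_sum_mul_sub {a : ℕ → ℝ} {p : ℕ} (hsum : ∑ i ∈ range (p + 1), a i = 0)
    (Δ : ℝ) (Z : ℝ → Ω → ℝ) (j : ℕ) (ω : Ω) :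
    deltaAOmega a p Δ Z j ω = ∑ i ∈ range (p + 1), a i * (Z ((i + j : ℕ) * Δ) ω - Z (j * Δ) ω) := by
  simp only [deltaAOmega, mul_sub, sum_sub_distrib, ← sum_mul, hsum, zero_mul, sub_zero]

lemma abs_deltaAOmega_le {a : ℕ → ℝ} {p : ℕ} (hsum : ∑ i ∈ range (p + 1), a i = 0)
    {Z : ℝ → Ω → ℝ} {ω : Ω} {L Δ : ℝ} (hΔ : 0 ≤ Δ)
    (hZ : ∀ s t, 0 ≤ s → s ≤ t → |Z t ω - Z s ω| ≤ L * (t - s)) (j : ℕ) :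
    |deltaAOmega a p Δ Z j ω| ≤ L * (∑ i ∈ range (p + 1), |a i| * i) * Δ := by
  rw [deltaAOmega_eq_sum_mul_sub hsum, mul_sum, sum_mul]
  refine (abs_sum_le_sum_abs _ _).trans (sum_le_sum fun i _ => ?_)
  have hle : (j : ℝ) * Δ ≤ ((i + j : ℕ) : ℝ) * Δ := by gcongr; simp
  calc |a i * (Z ((i + j : ℕ) * Δ) ω - Z (j * Δ) ω)|
      ≤ |a i| * (L * (((i + j : ℕ) : ℝ) * Δ - j * Δ)) := by
        rw [abs_mul]; gcongr; exact hZ _ _ (by positivity) hle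
    _ = L * (|a i| * i) * Δ := by push_cast; ring

end Increments

lemma integral_mul_sum_abs_mul_le {Ω ι : Type*} [MeasurableSpace Ω] {μ : Measure Ω}
    {s : Finset ι} {c b : ℝ} (hc : 0 ≤ c) {U V : ι → Ω → ℝ}
    (hU : ∀ i ∈ s, Integrable (fun ω => |U i ω|) μ) (hV : ∀ i ∈ s, ∀ ω, |V i ω| ≤ b) :
    ∫ ω, c * ∑ i ∈ s, |U i ω| * |V i ω| ∂μ ≤ c * ∑ i ∈ s, b * ∫ ω, |U i ω| ∂μ := by
  have hbU : ∀ i ∈ s, Integrable (fun ω => b * |U i ω|) μ := fun i hi => (hU i hi).const_mul b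
  calc ∫ ω, c * ∑ i ∈ s, |U i ω| * |V i ω| ∂μ ≤ ∫ ω, c * ∑ i ∈ s, b * |U i ω| ∂μ := by
        refine integral_mono_of_nonneg (.of_forall fun ω => by positivity)
          ((integrable_finsetSum _ hbU).const_mul c) (.of_forall fun ω => ?_)
        refine mul_le_mul_of_nonneg_left (sum_le_sum fun i hi => ?_) hc
        rw [mul_comm]
        exact mul_le_mul_of_nonneg_right (hV i hi ω) (abs_nonneg _)
    _ = c * ∑ i ∈ s, b * ∫ ω, |U i ω| ∂μ := by
        rw [integral_const_mul, integral_finsetSum _ hbU]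
        simp only [integral_const_mul]

lemma normalized_sum_range_le {n p : ℕ} (hn : 1 ≤ n) {α H β b : ℝ} (hb : 0 ≤ b) {u : ℕ → ℝ}
    (hu : ∀ i, u i ≤ b * ((n : ℝ) ^ (-α)) ^ β) :
    (n : ℝ) ^ (-(1 : ℝ) / 2) * ((n : ℝ) ^ (-α)) ^ (-(2 * H)) * ∑ i ∈ range (n - p + 1), u i
      ≤ 2 * b * (n : ℝ) ^ ((1 : ℝ) / 2 - α * (β - 2 * H)) := by
  have hn0 : (0 : ℝ) < n := by exact_mod_cast hn
  have hcard : ((n - p + 1 : ℕ) : ℝ) ≤ 2 * n := by exact_mod_cast (by omega : n - p + 1 ≤ 2 * n)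
  have hsum : ∑ i ∈ range (n - p + 1), u i ≤ 2 * n * (b * ((n : ℝ) ^ (-α)) ^ β) := by
    refine (sum_le_card_nsmul _ _ _ fun i _ => hu i).trans ?_
    rw [card_range, nsmul_eq_mul]
    gcongr
  calc (n : ℝ) ^ (-(1 : ℝ) / 2) * ((n : ℝ) ^ (-α)) ^ (-(2 * H)) * ∑ i ∈ range (n - p + 1), u i
      ≤ (n : ℝ) ^ (-(1 : ℝ) / 2) * ((n : ℝ) ^ (-α)) ^ (-(2 * H))
          * (2 * n * (b * ((n : ℝ) ^ (-α)) ^ β)) := by gcongr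
    _ = 2 * b * ((n : ℝ) ^ (-(1 : ℝ) / 2) * (n : ℝ) ^ (-α * -(2 * H)) * (n : ℝ) ^ (1 : ℝ)
          * (n : ℝ) ^ (-α * β)) := by
        rw [Real.rpow_one, Real.rpow_mul hn0.le, Real.rpow_mul hn0.le]; ring
    _ = 2 * b * (n : ℝ) ^ ((1 : ℝ) / 2 - α * (β - 2 * H)) := by
        rw [← Real.rpow_add hn0, ← Real.rpow_add hn0, ← Real.rpow_add hn0]; ring_nf

lemma normalized_sum_sq_le {n p : ℕ} (hn : 1 ≤ n) {α H K : ℝ} {V : ℕ → ℝ}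
    (hV : ∀ i, |V i| ≤ K * (n : ℝ) ^ (-α)) :
    (n : ℝ) ^ (-(1 : ℝ) / 2) * ((n : ℝ) ^ (-α)) ^ (-(2 * H)) * ∑ i ∈ range (n - p + 1), V i ^ 2
      ≤ 2 * K ^ 2 * (n : ℝ) ^ ((1 : ℝ) / 2 - α * (2 - 2 * H)) :=
  normalized_sum_range_le hn (sq_nonneg K) fun i => by
    rw [Real.rpow_two, ← mul_pow, ← sq_abs]
    exact pow_le_pow_left₀ (abs_nonneg _) (hV i) 2

lemma integral_normalized_sum_abs_mul_le {Ω : Type*} [MeasurableSpace Ω] {μ : Measure Ω}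
    {n p : ℕ} (hn : 1 ≤ n) {α H K s : ℝ} (hK : 0 ≤ K) (hs : 0 ≤ s) {U V : ℕ → Ω → ℝ}
    (hU : ∀ i, Integrable (fun ω => |U i ω|) μ)
    (hU_le : ∀ i, ∫ ω, |U i ω| ∂μ ≤ s * ((n : ℝ) ^ (-α)) ^ H)
    (hV : ∀ i ω, |V i ω| ≤ K * (n : ℝ) ^ (-α)) :
    ∫ ω, (n : ℝ) ^ (-(1 : ℝ) / 2) * ((n : ℝ) ^ (-α)) ^ (-(2 * H)) *
        ∑ i ∈ range (n - p + 1), |U i ω| * |V i ω| ∂μ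
      ≤ 2 * (K * s) * (n : ℝ) ^ ((1 : ℝ) / 2 - α * (1 - H)) := by
  have hΔ : 0 < (n : ℝ) ^ (-α) := Real.rpow_pos_of_pos (by exact_mod_cast hn) _
  refine (integral_mul_sum_abs_mul_le (by positivity) (fun i _ => hU i) fun i _ => hV i).trans ?_
  have h := normalized_sum_range_le hn (p := p) (H := H) (β := 1 + H) (mul_nonneg hK hs)
    (u := fun i => K * (n : ℝ) ^ (-α) * ∫ ω, |U i ω| ∂μ) fun i => by
      calc K * (n : ℝ) ^ (-α) * ∫ ω, |U i ω| ∂μ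
          ≤ K * (n : ℝ) ^ (-α) * (s * ((n : ℝ) ^ (-α)) ^ H) := by gcongr; exact hU_le i
        _ = K * s * ((n : ℝ) ^ (-α)) ^ (1 + H) := by rw [Real.rpow_add hΔ, Real.rpow_one]; ring
  rwa [show 1 + H - 2 * H = 1 - H by ring] at h

lemma tendsto_zero_of_le_mul_rpow {u : ℕ → ℝ} {C e : ℝ} (he : e < 0) (hu0 : ∀ n, 0 ≤ u n)
    (hu : ∀ n, 1 ≤ n → u n ≤ C * (n : ℝ) ^ e) : Tendsto u atTop (𝓝 0) := by
  have hlim : Tendsto (fun n : ℕ => C * (n : ℝ) ^ e) atTop (𝓝 0) := by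
    simpa using ((tendsto_rpow_neg_atTop (neg_pos.mpr he)).comp
      tendsto_natCast_atTop_atTop).const_mul C
  exact squeeze_zero' (.of_forall hu0) (eventually_atTop.mpr ⟨1, hu⟩) hlim

lemma exists_bound_and_tendsto_zero {u : ℕ → ℝ} {b e : ℝ} (he : e < 0) (hu0 : ∀ n, 0 ≤ u n)
    (hu : ∀ n, 1 ≤ n → u n ≤ b * (n : ℝ) ^ e) :
    ∃ C > 0, (∀ n : ℕ, 1 ≤ n → u n ≤ C * (n : ℝ) ^ e) ∧ Tendsto u atTop (𝓝 0) :=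
  ⟨max b 1, by positivity, fun n hn => (hu n hn).trans (by gcongr; exact le_max_left _ _),
    tendsto_zero_of_le_mul_rpow he hu0 hu⟩

lemma exists_uniform_bound_and_tendsto_zero {ι : Type*} {u : ℕ → ι → ℝ} {b e : ℝ} (he : e < 0)
    (hu0 : ∀ n x, 0 ≤ u n x) (hu : ∀ n x, 1 ≤ n → u n x ≤ b * (n : ℝ) ^ e) :
    ∃ C > 0, (∀ (n : ℕ) (x : ι), 1 ≤ n → u n x ≤ C * (n : ℝ) ^ e) ∧
      ∀ x, Tendsto (u · x) atTop (𝓝 0) :=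
  ⟨max b 1, by positivity, fun n x hn => (hu n x hn).trans (by gcongr; exact le_max_left _ _),
    fun x => tendsto_zero_of_le_mul_rpow he (hu0 · x) fun n hn => hu n x hn⟩

theorem remainder_estimates_small_H_general
    {Ω : Type*} [MeasurableSpace Ω] (μ : Measure Ω) [IsProbabilityMeasure μ]
    (H α M : ℝ) (hH : H ∈ Set.Ioo (0 : ℝ) (1 / 2))
    (hα : 1 / (2 * (1 - H)) < α)
    (B : ℝ → Ω → ℝ) (f : ℝ → ℝ → ℝ) (X : ℝ → Ω → ℝ)
    (hbound : ∀ s x : ℝ, 0 ≤ s → |f s x| ≤ M)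
    (hInt : ∀ (ω : Ω) (u v : ℝ),
      IntervalIntegrable (fun s => f s (X s ω)) volume u v)
    (Y : ℝ → Ω → ℝ) (hY : ∀ t ω, Y t ω = ∫ s in (0 : ℝ)..t, f s (X s ω))
    (p : ℕ) (a : ℕ → ℝ)
    (hsum : ∑ i ∈ range (p + 1), a i = 0)
    (σ : ℕ → NNReal)
    (hσ : ∀ n : ℕ, 1 ≤ n → (σ n : ℝ)
      = -((((n : ℝ) ^ (-α)) ^ (2 * H)) / 2) *
          ∑ k ∈ range (p + 1), ∑ l ∈ range (p + 1),
            a k * a l * |(k : ℝ) - l| ^ (2 * H))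
    (hlaw : ∀ (n : ℕ) (i : ℕ), 1 ≤ n →
      μ.map (deltaAOmega a p ((n : ℝ) ^ (-α)) B i) = gaussianReal 0 (σ n))
    (hmeas : ∀ (n i : ℕ), AEMeasurable (deltaAOmega a p ((n : ℝ) ^ (-α)) B i) μ) :
    (∃ C > 0, (∀ (n : ℕ) (ω : Ω), 1 ≤ n →
        (n : ℝ) ^ (-(1 : ℝ) / 2) * ((n : ℝ) ^ (-α)) ^ (-(2 * H)) *
            ∑ i ∈ range (n - p + 1), (deltaAOmega a p ((n : ℝ) ^ (-α)) Y i ω) ^ 2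
          ≤ C * (n : ℝ) ^ ((1 : ℝ) / 2 - α * (2 - 2 * H))) ∧
      ∀ ω : Ω, Tendsto (fun n : ℕ =>
        (n : ℝ) ^ (-(1 : ℝ) / 2) * ((n : ℝ) ^ (-α)) ^ (-(2 * H)) *
          ∑ i ∈ range (n - p + 1), (deltaAOmega a p ((n : ℝ) ^ (-α)) Y i ω) ^ 2)
        atTop (nhds 0)) ∧
    (∃ C > 0, (∀ n : ℕ, 1 ≤ n →
        ∫ ω, (n : ℝ) ^ (-(1 : ℝ) / 2) * ((n : ℝ) ^ (-α)) ^ (-(2 * H)) *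
            ∑ i ∈ range (n - p + 1),
              |deltaAOmega a p ((n : ℝ) ^ (-α)) B i ω| *
                |deltaAOmega a p ((n : ℝ) ^ (-α)) Y i ω| ∂μ
          ≤ C * (n : ℝ) ^ ((1 : ℝ) / 2 - α * (1 - H))) ∧
      Tendsto (fun n : ℕ =>
        ∫ ω, (n : ℝ) ^ (-(1 : ℝ) / 2) * ((n : ℝ) ^ (-α)) ^ (-(2 * H)) *
          ∑ i ∈ range (n - p + 1),
            |deltaAOmega a p ((n : ℝ) ^ (-α)) B i ω| *
              |deltaAOmega a p ((n : ℝ) ^ (-α)) Y i ω| ∂μ)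
        atTop (nhds 0)) := by
  have hM : 0 ≤ M := (abs_nonneg _).trans (hbound 0 0 le_rfl)
  have hα1 : 1 < α * (2 * (1 - H)) := by
    rwa [div_lt_iff₀ (by linarith [hH.2])] at hα
  have hK : 0 ≤ M * ∑ i ∈ range (p + 1), |a i| * i := by positivity
  have hY_incr : ∀ (n : ℕ) i ω, |deltaAOmega a p ((n : ℝ) ^ (-α)) Y i ω|
      ≤ M * (∑ i ∈ range (p + 1), |a i| * i) * (n : ℝ) ^ (-α) := fun n i ω =>
    abs_deltaAOmega_le hsum (by positivity) (fun s t hs hst => by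
      simpa only [hY] using abs_intervalIntegral_sub_le (hbound · _) (hInt ω 0) hs hst) i
  have hσ_scaling : ∀ n : ℕ, 1 ≤ n → (σ n : ℝ) = ((n : ℝ) ^ (-α)) ^ (2 * H) * σ 1 :=
    fun n hn => by
      rw [hσ n hn, hσ 1 le_rfl]
      simp only [Nat.cast_one, Real.one_rpow]
      ring
  have hB_incr : ∀ n : ℕ, 1 ≤ n → ∀ i, ∫ ω, |deltaAOmega a p ((n : ℝ) ^ (-α)) B i ω| ∂μ
      ≤ √(σ 1) * ((n : ℝ) ^ (-α)) ^ H := fun n hn i => by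
    refine (integral_abs_le_sqrt_of_map_eq_gaussianReal (hmeas n i) (hlaw n i hn)).trans_eq ?_
    rw [hσ_scaling n hn, Real.sqrt_mul' _ (σ 1).coe_nonneg, sqrt_rpow_two_mul (by positivity),
      mul_comm]
  exact ⟨exists_uniform_bound_and_tendsto_zero (by linarith) (fun n ω => by positivity)
      fun n ω hn => normalized_sum_sq_le hn (hY_incr n · ω),
    exists_bound_and_tendsto_zero (by linarith) (fun n => integral_nonneg fun ω => by positivity)
      fun n hn => integral_normalized_sum_abs_mul_le hn hK (Real.sqrt_nonneg _)
        (fun i => integrable_abs_of_map_eq_gaussianReal (hmeas n i) (hlaw n i hn))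
        (hB_incr n hn) (hY_incr n)⟩

/-- Remainder estimates in the CLT for the quadratic `a`-variations, case `H < 1/2`. -/
theorem remainder_estimates_small_H
    {Ω : Type*} [MeasurableSpace Ω] (μ : Measure Ω) [IsProbabilityMeasure μ]
    (H α M : ℝ) (hH : H ∈ Set.Ioo (0 : ℝ) (1 / 2))
    (hα : 1 / (2 * (1 - H)) < α) (hM : 0 ≤ M)
    (B : ℝ → Ω → ℝ) (f : ℝ → ℝ → ℝ) (X : ℝ → Ω → ℝ)
    (hbound : ∀ s x : ℝ, 0 ≤ s → |f s x| ≤ M)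
    (hInt : ∀ (ω : Ω) (u v : ℝ),
      IntervalIntegrable (fun s => f s (X s ω)) volume u v)
    (Y : ℝ → Ω → ℝ) (hY : ∀ t ω, Y t ω = ∫ s in (0 : ℝ)..t, f s (X s ω))
    (p : ℕ) (hp : 0 < p) (a : ℕ → ℝ)
    (hsum : ∑ i ∈ range (p + 1), a i = 0)
    (σ : ℕ → NNReal)
    (hσ : ∀ n : ℕ, 1 ≤ n → (σ n : ℝ)
      = -((((n : ℝ) ^ (-α)) ^ (2 * H)) / 2) *
          ∑ k ∈ range (p + 1), ∑ l ∈ range (p + 1),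
            a k * a l * |(k : ℝ) - l| ^ (2 * H))
    (hlaw : ∀ (n : ℕ) (i : ℕ), 1 ≤ n →
      μ.map (deltaAOmega a p ((n : ℝ) ^ (-α)) B i) = gaussianReal 0 (σ n))
    (hmeas : ∀ (n i : ℕ), AEMeasurable (deltaAOmega a p ((n : ℝ) ^ (-α)) B i) μ)
    (hIntBY : ∀ (n i : ℕ), Integrable (fun ω =>
      |deltaAOmega a p ((n : ℝ) ^ (-α)) B i ω| *
        |deltaAOmega a p ((n : ℝ) ^ (-α)) Y i ω|) μ) :
    (∃ C > 0, (∀ (n : ℕ) (ω : Ω), 1 ≤ n →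
        (n : ℝ) ^ (-(1 : ℝ) / 2) * ((n : ℝ) ^ (-α)) ^ (-(2 * H)) *
            ∑ i ∈ range (n - p + 1), (deltaAOmega a p ((n : ℝ) ^ (-α)) Y i ω) ^ 2
          ≤ C * (n : ℝ) ^ ((1 : ℝ) / 2 - α * (2 - 2 * H))) ∧
      ∀ ω : Ω, Tendsto (fun n : ℕ =>
        (n : ℝ) ^ (-(1 : ℝ) / 2) * ((n : ℝ) ^ (-α)) ^ (-(2 * H)) *
          ∑ i ∈ range (n - p + 1), (deltaAOmega a p ((n : ℝ) ^ (-α)) Y i ω) ^ 2)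
        atTop (nhds 0)) ∧
    (∃ C > 0, (∀ n : ℕ, 1 ≤ n →
        ∫ ω, (n : ℝ) ^ (-(1 : ℝ) / 2) * ((n : ℝ) ^ (-α)) ^ (-(2 * H)) *
            ∑ i ∈ range (n - p + 1),
              |deltaAOmega a p ((n : ℝ) ^ (-α)) B i ω| *
                |deltaAOmega a p ((n : ℝ) ^ (-α)) Y i ω| ∂μ
          ≤ C * (n : ℝ) ^ ((1 : ℝ) / 2 - α * (1 - H))) ∧
      Tendsto (fun n : ℕ =>
        ∫ ω, (n : ℝ) ^ (-(1 : ℝ) / 2) * ((n : ℝ) ^ (-α)) ^ (-(2 * H)) *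
          ∑ i ∈ range (n - p + 1),
            |deltaAOmega a p ((n : ℝ) ^ (-α)) B i ω| *
              |deltaAOmega a p ((n : ℝ) ^ (-α)) Y i ω| ∂μ)
        atTop (nhds 0)) :=
  remainder_estimates_small_H_general μ H α M hH hα B f X hbound hInt Y hY p a hsum σ hσ hlaw hmeas
end
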